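/- arXiv:2207.07607 — 2 statements merged into one kernel-verified Lean document; each statement's English description precedes it below -/
import Mathlib

section
/- Let ε ∈ (0, 1/120) and δ ∈ (2ε, 1/60). Let G be a bipartite graph and let H be a (β, (1−ε)β)-EDCS of G, where β > (1−ε)β ≥ 1. Let Vmid := {v : deg_H(v) ∈ [0.4β, 0.6β]}, Vlow := {v : deg_H(v) ∈ [0, 0.2β]}, and H' := H[Vlow, Vmid]. If μ(H) ≤ (2/3 + δ)·μ(G), then for every matching M of H', μ(G[Vmid ∖ V(M)]) ≥ (1/3 − 800·δ)·μ(G). -/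
open scoped Classical

noncomputable section

variable {V : Type*}

/-- `M` is a matching of `G`: a set of edges of `G` that are pairwise vertex-disjoint. -/
def IsMatchingSet (G : SimpleGraph V) (M : Set (Sym2 V)) : Prop :=
  M ⊆ G.edgeSet ∧ M.Pairwise fun e f => ∀ v : V, v ∈ e → v ∉ f

/-- The set of vertices matched by the edge set `M`. -/
def mVerts (M : Set (Sym2 V)) : Set V := {v | ∃ e ∈ M, v ∈ e}

/-- The matching number of `G`. -/
def nu (G : SimpleGraph V) : ℕ :=
  sSup {n | ∃ M : Set (Sym2 V), IsMatchingSet G M ∧ M.ncard = n}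

/-- The bipartite subgraph of `G` consisting of the edges of `G` with one endpoint in `X`
and the other endpoint in `Y`. -/
def between (G : SimpleGraph V) (X Y : Set V) : SimpleGraph V where
  Adj u v := G.Adj u v ∧ ((u ∈ X ∧ v ∈ Y) ∨ (u ∈ Y ∧ v ∈ X))
  symm := ⟨fun u v h => ⟨h.1.symm, h.2.elim (fun hh => Or.inr ⟨hh.2, hh.1⟩) (fun hh => Or.inl ⟨hh.2, hh.1⟩)⟩⟩
  loopless := ⟨fun v h => G.loopless.irrefl v h.1⟩

/-- The induced subgraph of `G` on the vertex set `U` (on the same vertex type). -/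
def inducedOn (G : SimpleGraph V) (U : Set V) : SimpleGraph V where
  Adj u v := G.Adj u v ∧ u ∈ U ∧ v ∈ U
  symm := ⟨fun u v h => ⟨h.1.symm, h.2.2, h.2.1⟩⟩
  loopless := ⟨fun v h => G.loopless.irrefl v h.1⟩

/-- The degree of `v` in `H`. -/
def deg (H : SimpleGraph V) (v : V) : ℕ := (H.neighborSet v).ncard

/-- `H` is a `(β, βm)`-EDCS of `G`. -/
def IsEDCS (G H : SimpleGraph V) (β βm : ℝ) : Prop :=
  H ≤ G ∧ (∀ u v, H.Adj u v → (deg H u + deg H v : ℝ) ≤ β) ∧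
    (∀ u v, G.Adj u v → ¬ H.Adj u v → βm ≤ (deg H u + deg H v : ℝ))

/-- The neighborhood of a set `A` in `H`. -/
def nbhd (H : SimpleGraph V) (A : Set V) : Set V := {v | ∃ a ∈ A, H.Adj a v}

/-- The edges of `M` with one endpoint in `X` and the other endpoint in `Y`. -/
def crossE (M : Set (Sym2 V)) (X Y : Set V) : Set (Sym2 V) :=
  {e | e ∈ M ∧ ∃ u v, e = s(u, v) ∧ u ∈ X ∧ v ∈ Y}

/-- `M` is a maximal matching of `G`. -/
def IsMaximalMatching (G : SimpleGraph V) (M : Set (Sym2 V)) : Prop :=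
  IsMatchingSet G M ∧ ∀ M' : Set (Sym2 V), IsMatchingSet G M' → M ⊆ M' → M' = M

/-!
Take a maximum matching `Ms` of `G` and, by König's theorem, a vertex cover `C` of the
bipartite graph `H` with `#C ≤ μ(H)`. At most `#C` edges of `Ms` meet `C`; the others, `F`, are
edges of `G` outside `H`, so by the EDCS property the degrees of their endpoints sum to at least
`(1 - ε)β`, and the squares of these degrees sum to at least `(1/2 - ε)β²`, or `0.51β²` if an
endpoint lies outside `Vmid`. All `H`-neighbours of endpoints of `F` lie in `C`, so double
counting bounds the same sum of squares by `∑_{x ∈ C} deg x (β - deg x)`, which is at most `β²/4`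
per vertex of `C` and `β²/5` per vertex of `C ∩ Vlow`. An edge of `F` inside `Vmid` that touches
`V(M)` is charged injectively to the `M`-partner of that endpoint, a vertex of `C ∩ Vlow`.
Comparing the two bounds shows that few edges of `F` are unbalanced or charged, and the rest form
a matching of `G[Vmid \ V(M)]`.
-/

open Finset

namespace IsMatchingSet

variable {G G' : SimpleGraph V} {M N : Set (Sym2 V)}

lemma eq_of_mem_of_mem (hM : IsMatchingSet G M) {e f : Sym2 V} (he : e ∈ M) (hf : f ∈ M)
    {v : V} (hve : v ∈ e) (hvf : v ∈ f) : e = f := by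
  by_contra hef
  exact hM.2 he hf hef v hve hvf

lemma anti (hM : IsMatchingSet G M) (hNM : N ⊆ M) : IsMatchingSet G N :=
  ⟨hNM.trans hM.1, hM.2.mono hNM⟩

lemma mono (hM : IsMatchingSet G M) (hGG' : G ≤ G') : IsMatchingSet G' M :=
  ⟨fun _ he => SimpleGraph.edgeSet_mono hGG' (hM.1 he), hM.2⟩

lemma toInducedOn (hM : IsMatchingSet G M) {U : Set V} (hU : ∀ e ∈ M, ∀ w ∈ e, w ∈ U) :
    IsMatchingSet (inducedOn G U) M := by
  refine ⟨fun e he => ?_, hM.2⟩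
  induction e with
  | _ x y =>
    exact ⟨hM.1 he, hU _ he x (Sym2.mem_mk_left x y), hU _ he y (Sym2.mem_mk_right x y)⟩

variable [Fintype V]

lemma card_le_nu {M : Finset (Sym2 V)} (hM : IsMatchingSet G ↑M) : #M ≤ nu G := by
  refine le_csSup ⟨Nat.card (Sym2 V), ?_⟩ ⟨M, hM, Set.ncard_coe_finset M⟩
  rintro n ⟨M', -, rfl⟩
  exact Set.ncard_le_card M'

lemma card_le_card_filter_avoid_add {M : Finset (Sym2 V)} (hM : IsMatchingSet G ↑M)
    (C : Finset V) : #M ≤ #{e ∈ M | ∀ w ∈ e, w ∉ C} + #C := by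
  have hmeet : #{e ∈ M | ¬∀ w ∈ e, w ∉ C} ≤ #C := by
    refine card_le_card_of_forall_subsingleton (fun e w => w ∈ e) ?_ ?_
    · simpa using fun e _ w hw hwC => ⟨w, hwC, hw⟩
    · rintro w - e ⟨he, hwe⟩ f ⟨hf, hwf⟩
      exact hM.eq_of_mem_of_mem (mem_filter.1 he).1 (mem_filter.1 hf).1 hwe hwf
  have := card_filter_add_card_filter_not (s := M) fun e => ∀ w ∈ e, w ∉ C
  omega

end IsMatchingSet

lemma exists_isMatchingSet_card_eq_nu [Fintype V] (G : SimpleGraph V) :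
    ∃ M : Finset (Sym2 V), IsMatchingSet G ↑M ∧ #M = nu G := by
  obtain ⟨M, hM, hcard⟩ :
      nu G ∈ {n | ∃ M : Set (Sym2 V), IsMatchingSet G M ∧ M.ncard = n} :=
    Nat.sSup_mem ⟨0, ∅, ⟨Set.empty_subset _, Set.pairwise_empty _⟩, Set.ncard_empty _⟩
      ⟨Nat.card (Sym2 V), by rintro n ⟨M', -, rfl⟩; exact Set.ncard_le_card M'⟩
  exact ⟨M.toFinset, by simpa using hM, by rwa [← Set.ncard_eq_toFinset_card']⟩

section Koenig

variable [Fintype V] {H : SimpleGraph V}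

lemma card_le_nu_of_injective {ι : Type*} [Fintype ι] {a b : ι → V} (ha : a.Injective)
    (hb : b.Injective) (hab : ∀ i j, a i ≠ b j) (hadj : ∀ i, H.Adj (a i) (b i)) :
    Fintype.card ι ≤ nu H := by
  have hinj : Function.Injective fun i => s(a i, b i) := by
    intro i j hij
    rcases Sym2.eq_iff.1 hij with ⟨h, -⟩ | ⟨h, -⟩
    · exact ha h
    · exact absurd h (hab i j)
  rw [← card_univ, ← card_image_of_injective univ hinj]
  refine IsMatchingSet.card_le_nu ⟨?_, ?_⟩ <;>
    simp only [coe_image, coe_univ, Set.image_univ]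
  · rintro _ ⟨i, rfl⟩
    exact hadj i
  · rintro _ ⟨i, rfl⟩ _ ⟨j, rfl⟩ hne v hvi hvj
    have hij : i ≠ j := fun h => hne (h ▸ rfl)
    rw [Sym2.mem_iff] at hvi hvj
    rcases hvi with rfl | rfl <;> rcases hvj with h | h
    · exact hij (ha h)
    · exact hab i j h
    · exact hab j i h.symm
    · exact hij (hb h)

lemma card_le_nu_add_of_forall_card_le {A : Finset V}
    (hA : ∀ a ∈ A, ∀ v, H.Adj a v → v ∉ A) (D : ℕ)
    (hD : ∀ S ⊆ A, #S ≤ #(S.biUnion (H.neighborFinset ·)) + D) : #A ≤ nu H + D := by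
  -- Hall's theorem, after adding `D` new vertices adjacent to every vertex of `A`
  let t : A → Finset (V ⊕ Fin D) := fun a => (H.neighborFinset a).disjSum univ
  have hall : ∀ s : Finset A, #s ≤ #(s.biUnion t) := by
    intro s
    rcases s.eq_empty_or_nonempty with rfl | ⟨a₀, ha₀⟩
    · simp
    set S := s.map (Function.Embedding.subtype (· ∈ A))
    have hsub : (S.biUnion (H.neighborFinset ·)).disjSum univ ⊆ s.biUnion t := by
      rintro (v | j) hx
      · simpa [S, t] using hx
      · exact mem_biUnion.2 ⟨a₀, ha₀, by simp [t]⟩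
    calc #s = #S := (card_map _).symm
      _ ≤ #(S.biUnion (H.neighborFinset ·)) + D :=
        hD S (by simp +contextual [S, Finset.subset_iff])
      _ = #((S.biUnion (H.neighborFinset ·)).disjSum univ) := by simp
      _ ≤ #(s.biUnion t) := card_le_card hsub
  obtain ⟨f, hf, hft⟩ := (all_card_le_biUnion_card_iff_exists_injective t).1 hall
  let ι := {p : A × V // f p.1 = .inl p.2}
  have hadj (i : ι) : H.Adj i.1.1 i.1.2 := by simpa [t, i.2] using hft i.1.1
  have hν : Fintype.card ι ≤ nu H := by
    refine card_le_nu_of_injective (a := fun i => i.1.1.1) (b := fun i => i.1.2) ?_ ?_ ?_ ?_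
    · intro i j hij
      have h₁ : i.1.1 = j.1.1 := Subtype.ext hij
      have h₂ : i.1.2 = j.1.2 := Sum.inl_injective (by rw [← i.2, ← j.2, h₁])
      exact Subtype.ext (Prod.ext h₁ h₂)
    · intro i j hij
      exact Subtype.ext (Prod.ext (hf (by rw [i.2, j.2]; exact congrArg _ hij)) hij)
    · exact fun i j => ne_of_mem_of_not_mem i.1.1.2 (hA _ j.1.1.2 _ (hadj j))
    · exact hadj
  calc #A = #(univ.image f) := by rw [card_image_of_injective _ hf, card_univ, Fintype.card_coe]
    _ ≤ #(univ.image (fun i : ι => Sum.inl i.1.2) ∪ univ.image Sum.inr) := by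
      refine card_le_card fun y hy => ?_
      obtain ⟨x, -, rfl⟩ := mem_image.1 hy
      rcases h : f x with v | j
      · exact mem_union_left _ (mem_image.2 ⟨⟨(x, v), h⟩, mem_univ _, rfl⟩)
      · exact mem_union_right _ (mem_image_of_mem _ (mem_univ j))
    _ ≤ Fintype.card ι + D := (card_union_le _ _).trans <|
      add_le_add card_image_le (card_image_le.trans (by simp))
    _ ≤ nu H + D := by omega

theorem exists_isVertexCover_card_le_nu (hH : H.Colorable 2) :
    ∃ C : Finset V, H.IsVertexCover ↑C ∧ #C ≤ nu H := by
  obtain ⟨c⟩ := hH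
  set A : Finset V := {v | c v = 0}
  have hside {u v : V} (huv : H.Adj u v) : u ∈ A ↔ v ∉ A := by
    have := c.valid huv
    simp only [A, mem_filter, mem_univ, true_and]
    omega
  -- `S` has maximal Hall deficiency `#S - #N(S)` in the colour class `A`; the cover
  -- `(A \ S) ∪ N(S)` then has size `#A` minus this deficiency
  obtain ⟨S, hSA, hSmax⟩ := A.powerset.exists_max_image
    (fun S => (#S : ℤ) - #(S.biUnion (H.neighborFinset ·))) ⟨∅, empty_mem_powerset A⟩
  rw [mem_powerset] at hSA
  set NS := S.biUnion (H.neighborFinset ·)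
  refine ⟨(A \ S) ∪ NS, ?_, ?_⟩
  · have hcov {u v : V} (huv : H.Adj u v) (hu : u ∈ A) :
        u ∈ (A \ S) ∪ NS ∨ v ∈ (A \ S) ∪ NS := by
      by_cases huS : u ∈ S
      · exact Or.inr (mem_union_right _ (mem_biUnion.2 ⟨u, huS, by simpa using huv⟩))
      · exact Or.inl (mem_union_left _ (mem_sdiff.2 ⟨hu, huS⟩))
    intro u v huv
    by_cases hu : u ∈ A
    · exact_mod_cast hcov huv hu
    · exact_mod_cast (hcov huv.symm ((hside huv.symm).2 hu)).symm
  · have hS₀ := hSmax ∅ (empty_mem_powerset A)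
    simp only [card_empty, biUnion_empty, Nat.cast_zero, sub_zero] at hS₀
    have hdef := card_le_nu_add_of_forall_card_le (fun a ha v hav => (hside hav).1 ha)
      (#S - #NS) fun S' hS' => by have := hSmax S' (mem_powerset.2 hS'); omega
    have := card_union_le (A \ S) NS
    rw [card_sdiff_of_subset hSA] at this
    have := card_le_card hSA
    omega

end Koenig

lemma half_sub_mul_sq_le_sq_add_sq {ε β a b : ℝ} (hβ : 0 ≤ (1 - ε) * β)
    (hab : (1 - ε) * β ≤ a + b) : (1 / 2 - ε) * β ^ 2 ≤ a ^ 2 + b ^ 2 := by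
  nlinarith [sq_nonneg (a - b), sq_nonneg (ε * β), mul_le_mul hab hab hβ (hβ.trans hab)]

lemma sq_add_sq_ge_of_notMem_Icc {β a b : ℝ} (hβ : 0 < β)
    (hab : 119 / 120 * β ≤ a + b) (hout : a ∉ Set.Icc (0.4 * β) (0.6 * β)) :
    51 / 100 * β ^ 2 ≤ a ^ 2 + b ^ 2 := by
  have hpq : 0 ≤ a + b - 119 / 120 * β := by linarith
  rcases not_and_or.1 hout with h | h
  · have hP : 0 ≤ 2 / 5 * β - a := by norm_num at h; linarith
    nlinarith [sq_nonneg (2 / 5 * β - a), sq_nonneg (b - 71 / 120 * β),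
      mul_nonneg hβ.le hpq, mul_nonneg hβ.le hP]
  · have hP : 0 ≤ a - 3 / 5 * β := by norm_num at h; linarith
    nlinarith [sq_nonneg (a - 3 / 5 * β), sq_nonneg (b - 47 / 120 * β),
      mul_nonneg hβ.le hpq, mul_nonneg hβ.le hP]

def degBand (H : SimpleGraph V) (lo hi : ℝ) : Set V :=
  {v | lo ≤ deg H v ∧ (deg H v : ℝ) ≤ hi}

lemma disjoint_degBand {H : SimpleGraph V} {a b c d : ℝ} (hbc : b < c) :
    Disjoint (degBand H a b) (degBand H c d) :=
  Set.disjoint_left.2 fun _ hb hc => (hc.1.trans hb.2).not_gt hbc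

lemma mem_of_between_adj {H : SimpleGraph V} {X Y : Set V} (hXY : Disjoint X Y) {w x : V}
    (hwx : (between H X Y).Adj w x) (hw : w ∈ Y) : x ∈ X :=
  hwx.2.elim (fun h => absurd hw (Set.disjoint_left.1 hXY h.1)) fun h => h.2

lemma sum_deg_mul_sub_le {H : SimpleGraph V} {β : ℝ} (C : Finset V) :
    ∑ x ∈ C, (deg H x : ℝ) * (β - deg H x) ≤
      β ^ 2 / 4 * #C - β ^ 2 / 20 * #{x ∈ C | x ∈ degBand H 0 (0.2 * β)} := by
  have hrhs : β ^ 2 / 4 * #C - β ^ 2 / 20 * #{x ∈ C | x ∈ degBand H 0 (0.2 * β)} =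
      ∑ x ∈ C, (β ^ 2 / 4 - if x ∈ degBand H 0 (0.2 * β) then β ^ 2 / 20 else 0) := by
    rw [sum_sub_distrib, ← sum_filter, sum_const, sum_const, nsmul_eq_mul, nsmul_eq_mul]
    ring
  rw [hrhs]
  refine sum_le_sum fun x _ => ?_
  split_ifs with hx
  · obtain ⟨h0, h1⟩ := hx
    norm_num at h1
    nlinarith
  · nlinarith [sq_nonneg (β / 2 - deg H x)]

section Counting

variable [Fintype V] {G H : SimpleGraph V} {β ε : ℝ}

lemma deg_eq_card_neighborFinset (H : SimpleGraph V) (v : V) :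
    deg H v = #(H.neighborFinset v) := by
  rw [deg, SimpleGraph.neighborFinset, Set.ncard_eq_toFinset_card']

lemma sum_sq_deg_le_sum_deg_mul_sub (hub : ∀ u v, H.Adj u v → (deg H u + deg H v : ℝ) ≤ β)
    {S C : Finset V} (hSC : ∀ w ∈ S, ∀ x, H.Adj w x → x ∈ C) :
    ∑ w ∈ S, (deg H w : ℝ) ^ 2 ≤ ∑ x ∈ C, (deg H x : ℝ) * (β - deg H x) := by
  calc ∑ w ∈ S, (deg H w : ℝ) ^ 2
        = ∑ w ∈ S, ∑ _x ∈ H.neighborFinset w, (deg H w : ℝ) := by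
        simp [deg_eq_card_neighborFinset, sq]
    _ = ∑ x ∈ C, ∑ w ∈ S with H.Adj x w, (deg H w : ℝ) := by
        refine sum_comm' ?_
        intro w x
        simp only [SimpleGraph.mem_neighborFinset, mem_filter]
        exact ⟨fun ⟨hw, hwx⟩ => ⟨⟨hw, hwx.symm⟩, hSC w hw x hwx⟩,
          fun ⟨⟨hw, hxw⟩, _⟩ => ⟨hw, hxw.symm⟩⟩
    _ ≤ ∑ x ∈ C, ∑ _w ∈ H.neighborFinset x, (β - deg H x) := by
        refine sum_le_sum fun x _ => ?_
        have hgap {w : V} (hxw : H.Adj x w) : (deg H w : ℝ) ≤ β - deg H x := by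
          linarith [hub x w hxw]
        calc ∑ w ∈ S with H.Adj x w, (deg H w : ℝ)
            ≤ ∑ w ∈ S with H.Adj x w, (β - deg H x) :=
              sum_le_sum fun w hw => hgap (mem_filter.1 hw).2
          _ ≤ ∑ _w ∈ H.neighborFinset x, (β - deg H x) :=
              sum_le_sum_of_subset_of_nonneg (fun w hw => by simpa using (mem_filter.1 hw).2)
                fun w hw _ => (Nat.cast_nonneg _).trans (hgap (by simpa using hw))
    _ = ∑ x ∈ C, (deg H x : ℝ) * (β - deg H x) := by
        simp only [sum_const, nsmul_eq_mul, deg_eq_card_neighborFinset]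

lemma sum_sq_deg_ge (hβ : 0 < β) (hε₀ : 0 ≤ ε) (hε : ε < 1 / 120)
    (hlb : ∀ u v, G.Adj u v → ¬H.Adj u v → (1 - ε) * β ≤ (deg H u + deg H v : ℝ))
    {F : Finset (Sym2 V)} (hF : IsMatchingSet G ↑F) (hFH : ∀ e ∈ F, e ∉ H.edgeSet) :
    (1 / 2 - ε) * β ^ 2 * #F
        + β ^ 2 / 100 * #{e ∈ F | ∃ w ∈ e, w ∉ degBand H (0.4 * β) (0.6 * β)}
      ≤ ∑ w ∈ F.biUnion Sym2.toFinset, (deg H w : ℝ) ^ 2 := by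
  have hdisj : (F : Set (Sym2 V)).PairwiseDisjoint Sym2.toFinset := by
    intro e he f hf hef
    refine disjoint_left.2 fun w hwe hwf => hef ?_
    exact hF.eq_of_mem_of_mem he hf (Sym2.mem_toFinset.1 hwe) (Sym2.mem_toFinset.1 hwf)
  set unbalanced : Sym2 V → Prop := fun e => ∃ w ∈ e, w ∉ degBand H (0.4 * β) (0.6 * β)
  have hlhs : (1 / 2 - ε) * β ^ 2 * #F + β ^ 2 / 100 * #{e ∈ F | unbalanced e} =
      ∑ e ∈ F, ((1 / 2 - ε) * β ^ 2 + if unbalanced e then β ^ 2 / 100 else 0) := by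
    rw [sum_add_distrib, ← sum_filter, sum_const, sum_const, nsmul_eq_mul, nsmul_eq_mul]
    ring
  rw [hlhs, sum_biUnion hdisj]
  refine sum_le_sum fun e he => ?_
  induction e with
  | _ x y =>
    have hxy : G.Adj x y := hF.1 he
    have hsum : (1 - ε) * β ≤ (deg H x + deg H y : ℝ) := hlb x y hxy (hFH _ he)
    rw [Sym2.toFinset_mk_eq, sum_pair hxy.ne]
    split_ifs with hun
    · obtain ⟨w, hw, hwout⟩ := hun
      have h119 : 119 / 120 * β ≤ (deg H x + deg H y : ℝ) := by nlinarith
      have : 51 / 100 * β ^ 2 ≤ (deg H x : ℝ) ^ 2 + (deg H y : ℝ) ^ 2 := by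
        rcases Sym2.mem_iff.1 hw with rfl | rfl
        · exact sq_add_sq_ge_of_notMem_Icc hβ h119 hwout
        · linarith [sq_add_sq_ge_of_notMem_Icc hβ (by linarith) hwout (b := deg H x)]
      nlinarith
    · have := half_sub_mul_sq_le_sq_add_sq (by nlinarith) hsum
      linarith

theorem IsEDCS.card_matching_avoiding_cover_le (hEDCS : IsEDCS G H β ((1 - ε) * β))
    (hβ : 0 < β) (hε₀ : 0 ≤ ε) (hε : ε < 1 / 120) {C : Finset V}
    (hC : H.IsVertexCover ↑C)
    {F : Finset (Sym2 V)} (hF : IsMatchingSet G ↑F) (hFC : ∀ e ∈ F, ∀ w ∈ e, w ∉ C) :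
    (1 / 2 - ε) * #F + #{e ∈ F | ∃ w ∈ e, w ∉ degBand H (0.4 * β) (0.6 * β)} / 100
      + #{x ∈ C | x ∈ degBand H 0 (0.2 * β)} / 20 ≤ (#C : ℝ) / 4 := by
  have hFH : ∀ e ∈ F, e ∉ H.edgeSet := by
    intro e he
    induction e with
    | _ x y =>
      intro hxy
      rcases hC hxy with hx | hy
      · exact hFC _ he x (Sym2.mem_mk_left x y) hx
      · exact hFC _ he y (Sym2.mem_mk_right x y) hy
  have hlower := sum_sq_deg_ge hβ hε₀ hε hEDCS.2.2 hF hFH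
  have hmiddle := sum_sq_deg_le_sum_deg_mul_sub hEDCS.2.1 (S := F.biUnion Sym2.toFinset) (C := C)
    fun w hw x hwx => by
      obtain ⟨e, he, hwe⟩ := mem_biUnion.1 hw
      exact (hC hwx).resolve_left (hFC e he w (Sym2.mem_toFinset.1 hwe))
  have hupper := sum_deg_mul_sub_le (H := H) (β := β) C
  refine le_of_mul_le_mul_left ?_ (by positivity : 0 < β ^ 2)
  linarith

lemma card_le_card_filter_add_add (F : Finset (Sym2 V)) (W P : Set V) :
    #F ≤ #{e ∈ F | ∀ w ∈ e, w ∈ W \ P} + #{e ∈ F | ∃ w ∈ e, w ∉ W}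
      + #{e ∈ F | ∃ w ∈ e, w ∈ W ∧ w ∈ P} := by
  refine (card_le_card fun e he => ?_).trans ((card_union_le _ _).trans
    (Nat.add_le_add_right (card_union_le _ _) _))
  simp only [mem_union, mem_filter, he, true_and, Set.mem_sdiff]
  by_cases hW : ∀ w ∈ e, w ∈ W
  · by_cases hP : ∃ w ∈ e, w ∈ P
    · obtain ⟨w, hw, hwP⟩ := hP
      exact Or.inr ⟨w, hw, hW w hw, hwP⟩
    · push Not at hP
      exact Or.inl (Or.inl fun w hw => ⟨hW w hw, hP w hw⟩)
  · push Not at hW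
    exact Or.inl (Or.inr hW)

lemma card_filter_mem_mVerts_le {F : Finset (Sym2 V)}
    {M : Set (Sym2 V)} {C : Finset V} {W L : Set V} (hF : IsMatchingSet G ↑F)
    (hFC : ∀ e ∈ F, ∀ w ∈ e, w ∉ C) (hM : IsMatchingSet H M) (hC : H.IsVertexCover ↑C)
    (hWL : ∀ w x, s(w, x) ∈ M → w ∈ W → x ∈ L) :
    #{e ∈ F | ∃ w ∈ e, w ∈ W ∧ w ∈ mVerts M} ≤ #{x ∈ C | x ∈ L} := by
  refine card_le_card_of_forall_subsingleton (fun e x => ∃ w ∈ e, s(w, x) ∈ M) ?_ ?_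
  · intro e he
    obtain ⟨heF, w, hwe, hwW, f, hfM, hwf⟩ := mem_filter.1 he
    obtain ⟨x, rfl⟩ := Sym2.mem_iff_exists.1 hwf
    have hxC : x ∈ C := ((hC (hM.1 hfM)).resolve_left (hFC e heF w hwe))
    exact ⟨x, mem_filter.2 ⟨hxC, hWL w x hfM hwW⟩, w, hwe, hfM⟩
  · rintro x - e ⟨he, w, hwe, hwx⟩ e' ⟨he', w', hwe', hw'x⟩
    have hww' : w = w' := Sym2.congr_left.1
      (hM.eq_of_mem_of_mem hwx hw'x (Sym2.mem_mk_right w x) (Sym2.mem_mk_right w' x))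
    subst hww'
    exact hF.eq_of_mem_of_mem (mem_filter.1 he).1 (mem_filter.1 he').1 hwe hwe'

end Counting

theorem EDCS_tight_P2_general [Fintype V] (G H : SimpleGraph V) (ε δ β : ℝ)
    (hε0 : 0 < ε) (hε : ε < 1 / 120) (hδl : 2 * ε < δ)
    (hbip : G.Colorable 2)
    (hβ1 : 1 ≤ (1 - ε) * β)
    (hEDCS : IsEDCS G H β ((1 - ε) * β))
    (Vmid Vlow : Set V)
    (hVmid : Vmid = {v | 0.4 * β ≤ (deg H v : ℝ) ∧ (deg H v : ℝ) ≤ 0.6 * β})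
    (hVlow : Vlow = {v | 0 ≤ (deg H v : ℝ) ∧ (deg H v : ℝ) ≤ 0.2 * β})
    (H' : SimpleGraph V) (hH' : H' = between H Vlow Vmid)
    (hmu : (nu H : ℝ) ≤ (2 / 3 + δ) * nu G) :
    ∀ M : Set (Sym2 V), IsMatchingSet H' M →
      (1 / 3 - 800 * δ) * nu G ≤ (nu (inducedOn G (Vmid \ mVerts M)) : ℝ) := by
  intro M hM
  subst hH'
  have hβ : 0 < β := by nlinarith
  have hmid : Vmid = degBand H (0.4 * β) (0.6 * β) := hVmid
  have hlow : Vlow = degBand H 0 (0.2 * β) := hVlow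
  obtain ⟨Ms, hMs, hMs_card⟩ := exists_isMatchingSet_card_eq_nu G
  obtain ⟨C, hC, hC_card⟩ := exists_isVertexCover_card_le_nu (hbip.mono_left hEDCS.1)
  set F := Ms.filter fun e => ∀ w ∈ e, w ∉ C
  have hF : IsMatchingSet G ↑F := hMs.anti (coe_subset.2 (filter_subset _ _))
  have hFC : ∀ e ∈ F, ∀ w ∈ e, w ∉ C := fun e he => (mem_filter.1 he).2
  have hMs_le : #Ms ≤ #F + #C := hMs.card_le_card_filter_avoid_add C
  have hdisj : Disjoint Vlow Vmid := by
    rw [hmid, hlow]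
    exact disjoint_degBand (by linarith)
  have hM_low : ∀ w x, s(w, x) ∈ M → w ∈ Vmid → x ∈ Vlow :=
    fun w x hwx => mem_of_between_adj hdisj (hM.1 hwx)
  have hload := hEDCS.card_matching_avoiding_cover_le hβ hε0.le hε hC hF hFC
  rw [← hmid, ← hlow] at hload
  have hsplit := card_le_card_filter_add_add F Vmid (mVerts M)
  have hhit := card_filter_mem_mVerts_le hF hFC (hM.mono fun _ _ h => h.1) hC hM_low
  have hgood :
      #{e ∈ F | ∀ w ∈ e, w ∈ Vmid \ mVerts M} ≤ nu (inducedOn G (Vmid \ mVerts M)) :=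
    ((hF.anti (coe_subset.2 (filter_subset _ _))).toInducedOn
      fun e he => (mem_filter.1 he).2).card_le_nu
  have hεF : ε * #F ≤ δ / 2 * #Ms := mul_le_mul (by linarith)
    (by exact_mod_cast card_le_card (filter_subset _ _)) (Nat.cast_nonneg _) (by linarith)
  have hδ : 0 ≤ δ * #Ms := mul_nonneg (by linarith) (Nat.cast_nonneg _)
  rw [← hMs_card] at hmu ⊢
  rify at hMs_le hC_card hsplit hhit hgood
  linarith [(#{x ∈ C | x ∈ Vlow}).cast_nonneg (α := ℝ)]

/-- Property (P2) of the characterization of tight EDCS instances (bipartite graphs):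
if `μ(H) ≤ (2/3 + δ)·μ(G)`, then for every matching `M` of `H'`,
`μ(G[Vmid ∖ V(M)]) ≥ (1/3 − 800δ)·μ(G)`. -/
theorem EDCS_tight_P2 [Fintype V] (G H : SimpleGraph V) (ε δ β : ℝ)
    (hε0 : 0 < ε) (hε : ε < 1 / 120) (hδl : 2 * ε < δ) (hδu : δ < 1 / 60)
    (hbip : G.Colorable 2)
    (hβ1 : 1 ≤ (1 - ε) * β) (hβ2 : (1 - ε) * β < β)
    (hEDCS : IsEDCS G H β ((1 - ε) * β))
    (Vmid Vlow : Set V)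
    (hVmid : Vmid = {v | 0.4 * β ≤ (deg H v : ℝ) ∧ (deg H v : ℝ) ≤ 0.6 * β})
    (hVlow : Vlow = {v | 0 ≤ (deg H v : ℝ) ∧ (deg H v : ℝ) ≤ 0.2 * β})
    (H' : SimpleGraph V) (hH' : H' = between H Vlow Vmid)
    (hmu : (nu H : ℝ) ≤ (2 / 3 + δ) * nu G) :
    ∀ M : Set (Sym2 V), IsMatchingSet H' M →
      (1 / 3 - 800 * δ) * nu G ≤ (nu (inducedOn G (Vmid \ mVerts M)) : ℝ) :=
  EDCS_tight_P2_general G H ε δ β hε0 hε hδl hbip hβ1 hEDCS Vmid Vlow hVmid hVlow H' hH' hmu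
end
end

section
/- Let G = (L, R, E) be a bipartite graph, let M be a matching of G, let M* be a maximum matching of G, and let L1 be the number of connected components of the symmetric difference M ⊕ M* that consist of a single edge (length-one augmenting paths for M). Let U := V ∖ V(M). Then the bipartite subgraph F_L := G[V(M) ∩ L, U ∩ R] satisfies μ(F_L) ≥ μ(G) − |M| − L1, and symmetrically the bipartite subgraph F_R := G[V(M) ∩ R, U ∩ L] satisfies μ(F_R) ≥ μ(G) − |M| − L1. -/
open scoped Classical

noncomputable section

variable {V : Type*}

/-!
Every edge of `M*` either has an endpoint in `V(M) ∩ R`, or joins `V(M) ∩ L` to `U ∩ R`, or has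
both endpoints in `U`. Edges of the first kind number at most `|V(M) ∩ R| ≤ |M|`, because `M*` is a
matching and an edge of `M` has only one endpoint in `R`. Edges of the second kind form a matching
of `F_L`. An edge of `M*` with both endpoints unmatched by `M` meets no other edge of `M ⊕ M*`, so
it is a single-edge component. Hence `μ(G) = |M*| ≤ |M| + L1 + μ(F_L)`; swap `L` and `R` for `F_R`.
-/

theorem Set.ncard_le_ncard_of_forall_subsingleton {α β : Type*} {s : Set α} {t : Set β}
    (r : α → β → Prop) (hs : ∀ a ∈ s, ∃ b ∈ t, r a b)
    (ht : ∀ b ∈ t, {a ∈ s | r a b}.Subsingleton) (htf : t.Finite) : s.ncard ≤ t.ncard := by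
  by_cases hsf : s.Finite
  · rw [Set.ncard_eq_toFinset_card s hsf, Set.ncard_eq_toFinset_card t htf]
    refine Finset.card_le_card_of_forall_subsingleton r (by simpa using hs) ?_
    simpa using ht
  · simp [Set.Infinite.ncard hsf]

open scoped symmDiff

def isolatedEdges (D : Set (Sym2 V)) : Set (Sym2 V) :=
  {e ∈ D | ∀ f ∈ D, f ≠ e → ∀ v : V, v ∈ e → v ∉ f}

section

variable {G H : SimpleGraph V} {M N : Set (Sym2 V)}

lemma IsMatchingSet.of_subset (hM : IsMatchingSet G M) (hNM : N ⊆ M) (hN : N ⊆ H.edgeSet) :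
    IsMatchingSet H N :=
  ⟨hN, hM.2.mono hNM⟩

lemma IsMatchingSet.ncard_le_nu [Finite V] (hM : IsMatchingSet G M) : M.ncard ≤ nu G :=
  le_csSup ⟨Nat.card (Sym2 V), by rintro n ⟨N, -, rfl⟩; exact Set.ncard_le_card N⟩ ⟨M, hM, rfl⟩

lemma IsMatchingSet.ncard_meeting_le [Finite V] (hM : IsMatchingSet G M) (S : Set V) :
    {e ∈ M | ∃ v ∈ e, v ∈ S}.ncard ≤ S.ncard :=
  Set.ncard_le_ncard_of_forall_subsingleton (fun e v => v ∈ e)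
    (fun _ ⟨_, v, hve, hvS⟩ => ⟨v, hvS, hve⟩)
    (fun v _ _ ⟨⟨he, _⟩, hve⟩ _ ⟨⟨hf, _⟩, hvf⟩ => by_contra fun hef => hM.2 he hf hef v hve hvf)
    (Set.toFinite S)

lemma ncard_mVerts_inter_le [Finite V] (hM : M ⊆ G.edgeSet) {R : Set V}
    (hR : ∀ ⦃u v⦄, G.Adj u v → u ∈ R → v ∉ R) : (mVerts M ∩ R).ncard ≤ M.ncard := by
  refine Set.ncard_le_ncard_of_forall_subsingleton (fun v e => v ∈ e)
    (fun v ⟨⟨e, he, hve⟩, _⟩ => ⟨e, he, hve⟩) (fun e he u ⟨⟨_, huR⟩, hue⟩ v ⟨⟨_, hvR⟩, hve⟩ => ?_)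
    (Set.toFinite M)
  induction e using Sym2.ind with
  | h a b =>
    have hab : G.Adj a b := hM he
    rcases Sym2.mem_iff.mp hue with rfl | rfl <;> rcases Sym2.mem_iff.mp hve with rfl | rfl
    all_goals first | rfl | exact absurd hvR (hR hab huR) | exact absurd huR (hR hab hvR)

lemma mem_isolatedEdges_symmDiff_of_unmatched (hN : IsMatchingSet G N) {e : Sym2 V} (he : e ∈ N)
    (hfree : ∀ v ∈ e, v ∉ mVerts M) : e ∈ isolatedEdges (M ∆ N) := by
  refine ⟨Or.inr ⟨he, fun heM => hfree _ e.out_fst_mem ⟨e, heM, e.out_fst_mem⟩⟩, ?_⟩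
  rintro f (⟨hfM, -⟩ | ⟨hfN, -⟩) hfe v hve hvf
  · exact hfree v hve ⟨f, hfM, hvf⟩
  · exact hN.2 hfN he hfe v hvf hve

end

lemma bipartite_edge_trichotomy {G : SimpleGraph V} {L R : Set V}
    (hbip : ∀ u v, G.Adj u v → (u ∈ L ∧ v ∈ R) ∨ (u ∈ R ∧ v ∈ L)) (W : Set V)
    {e : Sym2 V} (he : e ∈ G.edgeSet) :
    (∃ v ∈ e, v ∈ W ∩ R) ∨ e ∈ (between G (W ∩ L) ((Set.univ \ W) ∩ R)).edgeSet ∨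
      ∀ v ∈ e, v ∉ W := by
  induction e using Sym2.ind with
  | h a b =>
    have hab : G.Adj a b := he
    simp only [Sym2.mem_iff, SimpleGraph.mem_edgeSet, between, exists_eq_or_imp, exists_eq_left,
      forall_eq_or_imp, forall_eq, Set.mem_inter_iff, Set.mem_sdiff, Set.mem_univ, true_and]
    have := hbip a b hab
    tauto

theorem ncard_le_add_isolatedEdges_add_nu_between [Finite V] {G : SimpleGraph V} {L R : Set V}
    (hbip : ∀ u v, G.Adj u v → (u ∈ L ∧ v ∈ R) ∨ (u ∈ R ∧ v ∈ L)) (hdisj : Disjoint L R)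
    {M N : Set (Sym2 V)} (hM : M ⊆ G.edgeSet) (hN : IsMatchingSet G N) :
    N.ncard ≤ M.ncard + (isolatedEdges (M ∆ N)).ncard +
      nu (between G (mVerts M ∩ L) ((Set.univ \ mVerts M) ∩ R)) := by
  set F := between G (mVerts M ∩ L) ((Set.univ \ mVerts M) ∩ R)
  have hR : ∀ ⦃u v⦄, G.Adj u v → u ∈ R → v ∉ R := fun u v huv huR hvR =>
    (hbip u v huv).elim (fun h => hdisj.ne_of_mem h.1 huR rfl) (fun h => hdisj.ne_of_mem h.2 hvR rfl)
  have hcover : N ⊆ {e ∈ N | ∃ v ∈ e, v ∈ mVerts M ∩ R} ∪ {e ∈ N | e ∈ F.edgeSet} ∪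
      {e ∈ N | ∀ v ∈ e, v ∉ mVerts M} := fun e he => by
    rcases bipartite_edge_trichotomy hbip (mVerts M) (hN.1 he) with h | h | h
    exacts [Or.inl (Or.inl ⟨he, h⟩), Or.inl (Or.inr ⟨he, h⟩), Or.inr ⟨he, h⟩]
  have hMeetR : {e ∈ N | ∃ v ∈ e, v ∈ mVerts M ∩ R}.ncard ≤ M.ncard :=
    (hN.ncard_meeting_le _).trans (ncard_mVerts_inter_le hM hR)
  have hInF : {e ∈ N | e ∈ F.edgeSet}.ncard ≤ nu F :=
    (hN.of_subset (fun e he => he.1) fun e he => he.2).ncard_le_nu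
  have hFree : {e ∈ N | ∀ v ∈ e, v ∉ mVerts M}.ncard ≤ (isolatedEdges (M ∆ N)).ncard :=
    Set.ncard_le_ncard fun e he => mem_isolatedEdges_symmDiff_of_unmatched hN he.1 he.2
  have := (Set.ncard_le_ncard hcover).trans <|
    (Set.ncard_union_le _ _).trans (Nat.add_le_add_right (Set.ncard_union_le _ _) _)
  omega

theorem endpoint_subgraphs_large_matching_general [Fintype V] (G : SimpleGraph V) (L R : Set V)
    (hbipE : ∀ u v, G.Adj u v → (u ∈ L ∧ v ∈ R) ∨ (u ∈ R ∧ v ∈ L))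
    (hdisj : Disjoint L R)
    (M Mstar : Set (Sym2 V)) (hM : IsMatchingSet G M)
    (hMstar : IsMatchingSet G Mstar) (hMstarMax : Mstar.ncard = nu G)
    (D : Set (Sym2 V)) (hD : D = (M \ Mstar) ∪ (Mstar \ M))
    (L1 : ℕ) (hL1 : L1 = {e ∈ D | ∀ f ∈ D, f ≠ e → ∀ v : V, v ∈ e → v ∉ f}.ncard)
    (U : Set V) (hU : U = Set.univ \ mVerts M)
    (FL FR : SimpleGraph V)
    (hFL : FL = between G (mVerts M ∩ L) (U ∩ R))
    (hFR : FR = between G (mVerts M ∩ R) (U ∩ L)) :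
    (nu G : ℤ) - (M.ncard : ℤ) - (L1 : ℤ) ≤ (nu FL : ℤ) ∧
      (nu G : ℤ) - (M.ncard : ℤ) - (L1 : ℤ) ≤ (nu FR : ℤ) := by
  have hL1' : L1 = (isolatedEdges (M ∆ Mstar)).ncard := by rw [hL1, hD]; rfl
  have hLeft := ncard_le_add_isolatedEdges_add_nu_between hbipE hdisj hM.1 hMstar
  have hRight := ncard_le_add_isolatedEdges_add_nu_between (fun u v h => (hbipE u v h).symm)
    hdisj.symm hM.1 hMstar
  rw [← hL1', ← hU, ← hFL, hMstarMax] at hLeft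
  rw [← hL1', ← hU, ← hFR, hMstarMax] at hRight
  omega

/-- In a bipartite graph `G = (L, R)` with matching `M`, maximum matching `M*` and `L1`
single-edge components of `M ⊕ M*`, the subgraphs `F_L = G[V(M) ∩ L, U ∩ R]` and
`F_R = G[V(M) ∩ R, U ∩ L]` satisfy `μ(F_L), μ(F_R) ≥ μ(G) − |M| − L1`. -/
theorem endpoint_subgraphs_large_matching [Fintype V] (G : SimpleGraph V) (L R : Set V)
    (hbipE : ∀ u v, G.Adj u v → (u ∈ L ∧ v ∈ R) ∨ (u ∈ R ∧ v ∈ L))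
    (hdisj : Disjoint L R) (hcover : L ∪ R = Set.univ)
    (M Mstar : Set (Sym2 V)) (hM : IsMatchingSet G M)
    (hMstar : IsMatchingSet G Mstar) (hMstarMax : Mstar.ncard = nu G)
    (D : Set (Sym2 V)) (hD : D = (M \ Mstar) ∪ (Mstar \ M))
    (L1 : ℕ) (hL1 : L1 = {e ∈ D | ∀ f ∈ D, f ≠ e → ∀ v : V, v ∈ e → v ∉ f}.ncard)
    (U : Set V) (hU : U = Set.univ \ mVerts M)
    (FL FR : SimpleGraph V)
    (hFL : FL = between G (mVerts M ∩ L) (U ∩ R))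
    (hFR : FR = between G (mVerts M ∩ R) (U ∩ L)) :
    (nu G : ℤ) - (M.ncard : ℤ) - (L1 : ℤ) ≤ (nu FL : ℤ) ∧
      (nu G : ℤ) - (M.ncard : ℤ) - (L1 : ℤ) ≤ (nu FR : ℤ) :=
  endpoint_subgraphs_large_matching_general G L R hbipE hdisj M Mstar hM hMstar hMstarMax D hD L1
    hL1 U hU FL FR hFL hFR
end
end
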